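/- Let R = 3, B = {0, 1, 3}, L = {0, 1}. Then (R, B, L) forms a Riesz sequence triple (the vectors e_{3,0} = (1/√3)(1,1,1) and e_{3,1} = (1/√3)(1, e^{2πi/3}, 1) are linearly independent in ℂ³), but for every integer λ ∈ ℤ ∖ L, the triple (R, B, L ∪ {λ}) does not form a Riesz sequence triple: the three vectors e_{3,0}, e_{3,1}, e_{3,λ} are linearly dependent in ℂ³. -/

import Mathlib

/-! Up to the factor `3^{-1/2}`, `e_{3,λ} = (1, ω^λ, 1)` with `ω = e^{2πi/3}`, because the third
digit `3` makes the last coordinate `e^{2πiλ} = 1`. All these vectors lie in the plane `x = z`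
of `ℂ³`, so no three of them are independent, while `e_{3,0}` and `e_{3,1}` are independent
because their middle coordinates `1` and `ω` differ. -/

open Complex

noncomputable section

/-- The vector `e_{3,λ} = (1/√3)(e^{2πi·0·λ/3}, e^{2πi·1·λ/3}, e^{2πi·3·λ/3}) ∈ ℂ³`
for the digit set `B = {0,1,3}` and `R = 3`. -/
def v013 (lam : ℤ) : Fin 3 → ℂ :=
  fun i =>
    ((Real.sqrt 3 : ℂ))⁻¹ *
      Complex.exp (2 * Real.pi * Complex.I * ((![0, 1, 3] i : ℤ) : ℂ) * (lam : ℂ) / 3)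

section LinearAlgebra

variable {K : Type*} [Field K]

theorem linearIndependent_const_smul_iff {ι M : Type*} [AddCommGroup M] [Module K M]
    {c : K} (hc : c ≠ 0) (v : ι → M) :
    LinearIndependent K (c • v) ↔ LinearIndependent K v :=
  LinearIndependent.units_smul_iff v fun _ => Units.mk0 c hc

theorem linearIndependent_pair_one_mid_one {z w : K} (h : z ≠ w) :
    LinearIndependent K ![![1, z, 1], ![1, w, 1]] := by
  rw [LinearIndependent.pair_iff]
  intro s t hst
  have h0 : s + t = 0 := by simpa using congrFun hst 0
  have h1 : s * z + t * w = 0 := by simpa using congrFun hst 1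
  have ht : t * (w - z) = 0 := by linear_combination h1 - z * h0
  have ht : t = 0 := by simpa [sub_eq_zero, h.symm] using ht
  exact ⟨by simpa [ht] using h0, ht⟩

theorem not_linearIndependent_triple_one_mid_one (z w u : K) :
    ¬ LinearIndependent K ![![1, z, 1], ![1, w, 1], ![1, u, 1]] := by
  intro hli
  obtain rfl | hzw := eq_or_ne z w
  · exact zero_ne_one (hli.injective (a₁ := 0) (a₂ := 1) rfl)
  -- the coefficients are the cross product of `(1, 1, 1)` and `(z, w, u)`
  have hrel : ∑ i, ![u - w, z - u, w - z] i • ![![1, z, 1], ![1, w, 1], ![1, u, 1]] i = 0 := by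
    ext j
    fin_cases j <;> simp [Fin.sum_univ_three]
    ring
  have hcoeff : w - z = 0 := Fintype.linearIndependent_iff.mp hli _ hrel 2
  exact hzw (sub_eq_zero.mp hcoeff).symm

end LinearAlgebra

lemma v013_eq (lam : ℤ) :
    v013 lam = (Real.sqrt 3 : ℂ)⁻¹ • ![1, cexp (2 * Real.pi * I * lam / 3), 1] := by
  ext i
  fin_cases i
  · simp [v013]
  · simp [v013]
  · have h : 2 * (Real.pi : ℂ) * I * 3 * lam / 3 = lam * (2 * Real.pi * I) := by ring
    simp [v013, h, Complex.exp_int_mul_two_pi_mul_I]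

lemma exp_two_pi_I_div_three_ne_one : cexp (2 * Real.pi * I / 3) ≠ 1 := by
  simpa using (isPrimitiveRoot_exp 3 three_ne_zero).ne_one (by norm_num)

/-- `(3, {0,1,3}, {0,1})` is a Riesz sequence triple (`e_{3,0}, e_{3,1}` are linearly
independent), but no integer `λ ∉ {0,1}` can be added: `e_{3,0}, e_{3,1}, e_{3,λ}` are
always linearly dependent in `ℂ³`. -/
theorem example_013_riesz_triple_not_extendable :
    LinearIndependent ℂ ![v013 0, v013 1] ∧
      ∀ lam : ℤ, lam ∉ ({0, 1} : Set ℤ) →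
        ¬ LinearIndependent ℂ ![v013 0, v013 1, v013 lam] := by
  have hc : (Real.sqrt 3 : ℂ)⁻¹ ≠ 0 := by simp
  refine ⟨?_, fun lam _ => ?_⟩
  · rw [v013_eq, v013_eq, ← Matrix.smul_vec2, linearIndependent_const_smul_iff hc]
    refine linearIndependent_pair_one_mid_one ?_
    simpa using exp_two_pi_I_div_three_ne_one.symm
  · rw [v013_eq, v013_eq, v013_eq, ← Matrix.smul_vec3, linearIndependent_const_smul_iff hc]
    exact not_linearIndependent_triple_one_mid_one _ _ _

end
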